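/- Let k ≥ 2 and let A = A_k ⋯ A_1 be a factorization of a contraction A into contractions A_i : H_i → H_{i+1}. If the adjoints A_1*, A_2*, …, A_{k−1}* are all isometries (i.e., A_1, …, A_{k−1} are coisometries), then the factorization A = A_k ⋯ A_1 is k-regular. -/

import Mathlib

noncomputable section

open ContinuousLinearMap

/-- The defect operator `D_A = (I - A*A)^{1/2}` of a contraction `A`. -/
def defectOp {E F : Type*} [NormedAddCommGroup E] [InnerProductSpace ℂ E]
    [CompleteSpace E] [NormedAddCommGroup F] [InnerProductSpace ℂ F] [CompleteSpace F]
    (A : E →L[ℂ] F) : E →L[ℂ] E :=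
  CFC.sqrt (1 - (adjoint A).comp A)

/-- The defect space `𝒟_A`, the closure of the range of the defect operator. -/
def defectSpace {E F : Type*} [NormedAddCommGroup E] [InnerProductSpace ℂ E]
    [CompleteSpace E] [NormedAddCommGroup F] [InnerProductSpace ℂ F] [CompleteSpace F]
    (A : E →L[ℂ] F) : Submodule ℂ E :=
  (LinearMap.range (defectOp A : E →ₗ[ℂ] E)).topologicalClosure

theorem defectOp_mem {E F : Type*} [NormedAddCommGroup E] [InnerProductSpace ℂ E]
    [CompleteSpace E] [NormedAddCommGroup F] [InnerProductSpace ℂ F] [CompleteSpace F]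
    (A : E →L[ℂ] F) (x : E) : defectOp A x ∈ defectSpace A :=
  Submodule.le_topologicalClosure _ (LinearMap.mem_range_self (defectOp A : E →ₗ[ℂ] E) x)

variable {H : ℕ → Type*} [∀ n, NormedAddCommGroup (H n)] [∀ n, InnerProductSpace ℂ (H n)]
  [∀ n, CompleteSpace (H n)]

/-- The product `A_{a+l-1} ⋯ A_{a+1} A_a : H a → H (a+l)` of a chain of operators. -/
def prodLen (A : ∀ n, H n →L[ℂ] H (n + 1)) (a : ℕ) : ∀ l : ℕ, H a →L[ℂ] H (a + l)
  | 0 => ContinuousLinearMap.id ℂ (H a)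
  | l + 1 => (A (a + l)).comp (prodLen A a l)

/-- The product `A_{b-1} ⋯ A_{a+1} A_a : H a → H b` (junk value `0` if `b < a`). -/
def prodSeg (A : ∀ n, H n →L[ℂ] H (n + 1)) (a b : ℕ) : H a →L[ℂ] H b :=
  if h : a ≤ b then (Nat.add_sub_cancel' h ▸ prodLen A a (b - a)) else 0

/-- The tuple `(D_{A_k} A_{k-1} ⋯ A_1 h, …, D_{A_2} A_1 h, D_{A_1} h)` (with zero-based
indexing: component `i` is `D_{A i} (A_{i-1} ⋯ A_0 h)`), viewed as an element of the
Hilbert (ℓ²) direct sum of the defect spaces. -/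
def defectTuple (A : ∀ n, H n →L[ℂ] H (n + 1)) (k : ℕ) (h : H 0) :
    PiLp 2 (fun i : Fin k => ↥(defectSpace (A i))) :=
  WithLp.toLp 2 fun i => ⟨defectOp (A i) (prodSeg A 0 i h), defectOp_mem _ _⟩

/-- The factorization `A = A_{k-1} ⋯ A_0` is `k`-regular if the set of defect tuples is dense
in the Hilbert direct sum of the defect spaces. -/
def IsRegularFactorization (A : ∀ n, H n →L[ℂ] H (n + 1)) (k : ℕ) : Prop :=
  Dense (Set.range (defectTuple A k))

/-- A two-factor factorization `A = B ∘ C` is `2`-regular if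
`{ D_B (C h) ⊕ D_C h : h }` is dense in `𝒟_B ⊕ 𝒟_C`. -/
def IsRegularPair {E F G : Type*} [NormedAddCommGroup E] [InnerProductSpace ℂ E]
    [CompleteSpace E] [NormedAddCommGroup F] [InnerProductSpace ℂ F] [CompleteSpace F]
    [NormedAddCommGroup G] [InnerProductSpace ℂ G] [CompleteSpace G]
    (B : F →L[ℂ] G) (C : E →L[ℂ] F) : Prop :=
  Dense (Set.range fun h : E =>
    ((WithLp.equiv 2 (↥(defectSpace B) × ↥(defectSpace C))).symm
      (⟨defectOp B (C h), defectOp_mem _ _⟩, ⟨defectOp C h, defectOp_mem _ _⟩)))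

end

/-!
For a coisometry `C` (`C C* = 1`), `C*C` is a projection, so `D_C = 1 - C*C` is the projection
onto `ker C` and `𝒟_C = ker C`; hence `v ↦ (C v, D_C v)` maps onto `F ⊕ 𝒟_C`, with
`C* y + d ↦ (y, d)`. Given a target tuple, pick `g` with `D_{A_k} g` close to its last entry and
pull `g` back through the coisometries `A_{k-1}, …, A_1`, prescribing at each step the defect
`D_{A_i}` exactly. The resulting `h` reproduces all entries but the last exactly.
-/

open ContinuousLinearMap

lemma IsStarProjection.cfcSqrt_eq {R : Type*} [CStarAlgebra R] [PartialOrder R]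
    [StarOrderedRing R] {p : R} (hp : IsStarProjection p) : CFC.sqrt p = p :=
  CFC.sqrt_unique hp.isIdempotentElem.eq hp.nonneg

section Coisometry

variable {E F : Type*} [NormedAddCommGroup E] [InnerProductSpace ℂ E] [CompleteSpace E]
  [NormedAddCommGroup F] [InnerProductSpace ℂ F] [CompleteSpace F] {C : E →L[ℂ] F}

lemma apply_adjoint_apply_of_comp_adjoint_eq_one (hC : C ∘L adjoint C = 1) (y : F) :
    C (adjoint C y) = y :=
  congr($hC y)

lemma isStarProjection_adjoint_comp_self (hC : C ∘L adjoint C = 1) :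
    IsStarProjection (adjoint C ∘L C) where
  isIdempotentElem := by
    change (adjoint C ∘L C) ∘L (adjoint C ∘L C) = adjoint C ∘L C
    rw [comp_assoc, ← comp_assoc C, hC, one_def, id_comp]
  isSelfAdjoint := by
    rw [IsSelfAdjoint, star_eq_adjoint, adjoint_comp, adjoint_adjoint]

lemma defectOp_eq_one_sub_of_comp_adjoint_eq_one (hC : C ∘L adjoint C = 1) :
    defectOp C = 1 - adjoint C ∘L C :=
  (isStarProjection_adjoint_comp_self hC).one_sub.cfcSqrt_eq

lemma defectSpace_le_ker_of_comp_adjoint_eq_one (hC : C ∘L adjoint C = 1) :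
    defectSpace C ≤ C.ker := by
  refine Submodule.topologicalClosure_minimal _ ?_ (isClosed_ker C)
  rintro _ ⟨v, rfl⟩
  simp [defectOp_eq_one_sub_of_comp_adjoint_eq_one hC,
    apply_adjoint_apply_of_comp_adjoint_eq_one hC]

lemma exists_apply_eq_and_defectOp_eq (hC : C ∘L adjoint C = 1) (y : F) {d : E}
    (hd : d ∈ defectSpace C) : ∃ v, C v = y ∧ defectOp C v = d := by
  have hCd : C d = 0 := defectSpace_le_ker_of_comp_adjoint_eq_one hC hd
  refine ⟨adjoint C y + d, ?_, ?_⟩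
  · simp [hCd, apply_adjoint_apply_of_comp_adjoint_eq_one hC]
  · simp [defectOp_eq_one_sub_of_comp_adjoint_eq_one hC, hCd,
      apply_adjoint_apply_of_comp_adjoint_eq_one hC]

end Coisometry

lemma denseRange_defectOp {E F : Type*} [NormedAddCommGroup E] [InnerProductSpace ℂ E]
    [CompleteSpace E] [NormedAddCommGroup F] [InnerProductSpace ℂ F] [CompleteSpace F]
    (C : E →L[ℂ] F) :
    DenseRange fun v => (⟨defectOp C v, defectOp_mem C v⟩ : defectSpace C) := by
  rw [DenseRange, Subtype.dense_iff, ← Set.range_comp]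
  exact (Submodule.topologicalClosure_coe _).subset

section Chain

variable {H : ℕ → Type*} [∀ n, NormedAddCommGroup (H n)] [∀ n, InnerProductSpace ℂ (H n)]
  (A : ∀ n, H n →L[ℂ] H (n + 1))

lemma prodSeg_add (a l : ℕ) : prodSeg A a (a + l) = prodLen A a l := by
  have h : HEq (prodSeg A a (a + l)) (prodLen A a (a + l - a)) := by
    rw [prodSeg, dif_pos (Nat.le_add_right a l)]
    exact eqRec_heq_self _ _
  exact eq_of_heq (h.trans (by rw [Nat.add_sub_cancel_left]))

lemma prodSeg_self (a : ℕ) : prodSeg A a a = ContinuousLinearMap.id ℂ (H a) :=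
  prodSeg_add A a 0

lemma prodSeg_succ {a b : ℕ} (hab : a ≤ b) : prodSeg A a (b + 1) = A b ∘L prodSeg A a b := by
  obtain ⟨l, rfl⟩ := Nat.exists_eq_add_of_le hab
  exact (prodSeg_add A a (l + 1)).trans (by rw [prodSeg_add]; rfl)

variable [∀ n, CompleteSpace (H n)]

lemma exists_prodSeg_eq_and_defectOp_eq (m : ℕ)
    (hcoiso : ∀ i < m, A i ∘L adjoint (A i) = 1) (d : ∀ i, defectSpace (A i)) (g : H m) :
    ∃ h : H 0, prodSeg A 0 m h = g ∧ ∀ i < m, defectOp (A i) (prodSeg A 0 i h) = d i := by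
  induction m with
  | zero => exact ⟨g, by simp [prodSeg_self], fun i hi => absurd hi i.not_lt_zero⟩
  | succ m ih =>
    obtain ⟨v, hv, hDv⟩ := exists_apply_eq_and_defectOp_eq (hcoiso m m.lt_succ_self) g (d m).2
    obtain ⟨h, hh, hdefect⟩ := ih (fun i hi => hcoiso i (Nat.lt_succ_of_lt hi)) v
    refine ⟨h, by simp [prodSeg_succ A m.zero_le, hh, hv], fun i hi => ?_⟩
    rcases Nat.lt_succ_iff_lt_or_eq.mp hi with hi | rfl
    · exact hdefect i hi
    · rw [hh, hDv]

lemma isRegularFactorization_of_comp_adjoint_eq_one (m : ℕ)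
    (hcoiso : ∀ i < m, A i ∘L adjoint (A i) = 1) : IsRegularFactorization A (m + 1) := by
  intro x
  let d : ∀ i, defectSpace (A i) := fun i => if hi : i < m + 1 then x ⟨i, hi⟩ else 0
  let replaceLast (y : defectSpace (A m)) : PiLp 2 (fun i : Fin (m + 1) => defectSpace (A i)) :=
    WithLp.toLp 2 (Function.update x.ofLp (Fin.last m) y)
  have hreplace : Continuous replaceLast :=
    (PiLp.continuous_toLp 2 _).comp (continuous_const.update _ continuous_id)
  have hrange : ∀ g, replaceLast ⟨defectOp (A m) g, defectOp_mem _ _⟩ ∈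
      Set.range (defectTuple A (m + 1)) := by
    intro g
    obtain ⟨h, hh, hdefect⟩ := exists_prodSeg_eq_and_defectOp_eq A m hcoiso d g
    refine ⟨h, PiLp.ext fun i => ?_⟩
    rcases Fin.eq_castSucc_or_eq_last i with ⟨j, rfl⟩ | rfl
    · simp [replaceLast, defectTuple, hdefect j j.isLt, d, Fin.castSucc_ne_last]
      rfl
    · simp [replaceLast, defectTuple, hh]
  have hx : replaceLast (x (Fin.last m)) = x := by simp [replaceLast]
  rw [← hx]
  exact map_mem_closure hreplace (denseRange_defectOp (A m) _) (Set.forall_mem_range.2 hrange)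

end Chain

open ContinuousLinearMap in
theorem statement12_general {H : ℕ → Type*} [∀ n, NormedAddCommGroup (H n)]
    [∀ n, InnerProductSpace ℂ (H n)] [∀ n, CompleteSpace (H n)]
    (k : ℕ) (hk : 2 ≤ k) (A : ∀ n, H n →L[ℂ] H (n + 1))
    (hcoiso : ∀ i : ℕ, i < k - 1 → (A i).comp (adjoint (A i)) = 1) :
    IsRegularFactorization A k := by
  obtain ⟨m, rfl⟩ : ∃ m, k = m + 1 := ⟨k - 1, by omega⟩
  exact isRegularFactorization_of_comp_adjoint_eq_one A m hcoiso

open ContinuousLinearMap in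
/-- If in a factorization `A = A_k ⋯ A_1` into contractions the factors
`A_1, …, A_{k-1}` (all but the last applied) are coisometries (their adjoints are isometries),
then the factorization is `k`-regular. -/
theorem statement12 {H : ℕ → Type*} [∀ n, NormedAddCommGroup (H n)]
    [∀ n, InnerProductSpace ℂ (H n)] [∀ n, CompleteSpace (H n)]
    (k : ℕ) (hk : 2 ≤ k) (A : ∀ n, H n →L[ℂ] H (n + 1))
    (hA : ∀ i : Fin k, ‖A (i : ℕ)‖ ≤ 1)
    (hcoiso : ∀ i : ℕ, i < k - 1 → (A i).comp (adjoint (A i)) = 1) :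
    IsRegularFactorization A k :=
  statement12_general k hk A hcoiso
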